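/- (Gårding-type positivity of q_α, estimate (pseudo1).) Let ψ ∈ C²(Q̄) be real-valued with ∇_xψ ≠ 0 on Q̄, satisfying: 4 Σ_{m,m̃,k,ℓ} a_{mk}a_{m̃ℓ} ξ_m ξ_{m̃} ∂²_{x_kx_ℓ}ψ − 2 Σ_{m,k} a_{mk} ∂_{x_m}ψ a_{(k)}(t,x,ξ',ξ') + 4 Σ_{m,k} a_{mk} ξ_m a_{(k)}(t,x,ξ',∇ψ) > 0 for all (t,x) ∈ Q̄ and ξ' ∈ ℝⁿ∖{0} with a(t,x,∇ψ,ξ') = 0. Then there exists λ₁ > 0 such that for every λ ≥ λ₁ there is a constant C > 0 with q_α(t,x,ξ',τ) ≥ C(|ξ'|² + τ²φ(t,x)²) for all (t,x) ∈ Q, ξ' ∈ ℝⁿ and τ > 0. -/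

import Mathlib

open Real

/-- Partial derivative along the `k`-th coordinate of a function on `ℝⁿ`. -/
noncomputable def pd {n : ℕ} {E : Type*} [NormedAddCommGroup E] [NormedSpace ℝ E]
    (k : Fin n) (F : (Fin n → ℝ) → E) (x : Fin n → ℝ) : E :=
  fderiv ℝ F x (Pi.single k 1)

/-- The quadratic form `a(t,x,u,v) = Σ_{k,j} a_{kj}(t,x) u_k v_j`. -/
noncomputable def aF {n : ℕ} (a : Fin n → Fin n → ℝ → (Fin n → ℝ) → ℝ)
    (t : ℝ) (x u v : Fin n → ℝ) : ℝ :=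
  ∑ k, ∑ j, a k j t x * u k * v j

/-- The derived quadratic form `a_{(p)}(t,x,u,v) = Σ_{k,j} ∂_{x_p} a_{kj}(t,x) u_k v_j`. -/
noncomputable def aD {n : ℕ} (a : Fin n → Fin n → ℝ → (Fin n → ℝ) → ℝ)
    (p : Fin n) (t : ℝ) (x u v : Fin n → ℝ) : ℝ :=
  ∑ k, ∑ j, pd p (fun y => a k j t y) x * u k * v j

/-- Spatial gradient. -/
noncomputable def gradx {n : ℕ} (ψ : ℝ → (Fin n → ℝ) → ℝ) (t : ℝ) (x : Fin n → ℝ) :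
    Fin n → ℝ :=
  fun k => pd k (ψ t) x

/-- Spatial Hessian entry `∂²_{x_k x_ℓ} ψ`. -/
noncomputable def hessx {n : ℕ} (ψ : ℝ → (Fin n → ℝ) → ℝ) (t : ℝ) (x : Fin n → ℝ)
    (k l : Fin n) : ℝ :=
  pd l (fun y => pd k (ψ t) y) x

/-- The symbol `q_Ψ(t,x,ξ',τ)`. -/
noncomputable def qSym {n : ℕ} (a : Fin n → Fin n → ℝ → (Fin n → ℝ) → ℝ)
    (Ψ : ℝ → (Fin n → ℝ) → ℝ) (t : ℝ) (x ξ : Fin n → ℝ) (τ : ℝ) : ℝ :=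
  4 * ∑ m, ∑ m', ∑ k, ∑ l, a m k t x * a m' l t x
      * (ξ m * ξ m' + τ ^ 2 * gradx Ψ t x m * gradx Ψ t x m') * hessx Ψ t x k l
  - 2 * ∑ m, ∑ k, a m k t x * gradx Ψ t x m
      * (aD a k t x ξ ξ - τ ^ 2 * aD a k t x (gradx Ψ t x) (gradx Ψ t x))
  + 4 * ∑ m, ∑ k, a m k t x * ξ m * aD a k t x ξ (gradx Ψ t x)

/-- The symbol `q_α` associated with the Carleman weight
`α(t,x) = (e^{λψ} − e^{2λ‖ψ‖_{C⁰}})/t`, whose spatial gradient is `λφ∇ψ` and whose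
spatial Hessian is `λφ∂²ψ + λ²φ∂ψ∂ψ`, where `φ = e^{λψ}/t`. -/
noncomputable def qAlpha {n : ℕ} (a : Fin n → Fin n → ℝ → (Fin n → ℝ) → ℝ)
    (ψ : ℝ → (Fin n → ℝ) → ℝ) (lam t : ℝ) (x ξ : Fin n → ℝ) (τ : ℝ) : ℝ :=
  let φ := Real.exp (lam * ψ t x) / t
  4 * ∑ m, ∑ m', ∑ k, ∑ l, a m k t x * a m' l t x
      * (ξ m * ξ m' + τ ^ 2 * lam ^ 2 * φ ^ 2 * gradx ψ t x m * gradx ψ t x m')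
      * (lam * φ * hessx ψ t x k l + lam ^ 2 * φ * gradx ψ t x k * gradx ψ t x l)
  - 2 * lam * φ * ∑ m, ∑ k, a m k t x * gradx ψ t x m
      * (aD a k t x ξ ξ
        - τ ^ 2 * lam ^ 2 * φ ^ 2 * aD a k t x (gradx ψ t x) (gradx ψ t x))
  + 4 * lam * φ * ∑ m, ∑ k, a m k t x * ξ m * aD a k t x ξ (gradx ψ t x)

/-!
On the characteristic set `{σ = 0, a(ξ', ∇ψ) = 0}` of the weight `ψ`, the symbol `q_ψ(ξ', σ)` is
positive by the pseudo-convexity assumption. Since `∇α = λφ∇ψ`, the symbol `q_α` equals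
`λφ (q_ψ(ξ', σ) + 4λ G(ξ', σ))` with `σ = τλφ`, where `G = a(ξ', ∇ψ)² + σ² a(∇ψ, ∇ψ)²` is
nonnegative and vanishes exactly on that characteristic set (ellipticity makes `a(∇ψ, ∇ψ)`
positive). By compactness of `[0, T] × Ω̄ × {|ξ'|² + σ² = 1}`, the penalised symbol
`q_ψ + μ G` is bounded below by a positive constant there once `μ` is large, and homogeneity of
degree two in `(ξ', σ)` extends this to `c (|ξ'|² + σ²)`. Taking `μ = 4λ` and bounding `φ` below
by `e^{λ min ψ} / T` gives the estimate.
-/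

open Finset

section Derivatives

variable {n : ℕ}

lemma pd_slice_eq_fderiv {E : Type*} [NormedAddCommGroup E] [NormedSpace ℝ E]
    {F : ℝ × (Fin n → ℝ) → E} {t : ℝ} {x : Fin n → ℝ} (hF : DifferentiableAt ℝ F (t, x))
    (k : Fin n) : pd k (fun y => F (t, y)) x = fderiv ℝ F (t, x) (0, Pi.single k 1) := by
  have hslice : HasFDerivAt (fun y => F (t, y))
      ((fderiv ℝ F (t, x)).comp (ContinuousLinearMap.inr ℝ ℝ (Fin n → ℝ))) x :=
    hF.hasFDerivAt.comp x ((hasFDerivAt_const t x).prodMk (hasFDerivAt_id x))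
  rw [pd, hslice.fderiv]
  rfl

lemma continuous_pd_slice {F : ℝ × (Fin n → ℝ) → ℝ} (hF : ContDiff ℝ 1 F) (k : Fin n) :
    Continuous fun p : ℝ × (Fin n → ℝ) => pd k (fun y => F (p.1, y)) p.2 := by
  simp only [pd_slice_eq_fderiv (hF.differentiable one_ne_zero _)]
  exact (hF.continuous_fderiv one_ne_zero).clm_apply continuous_const

variable {ψ : ℝ → (Fin n → ℝ) → ℝ}

lemma continuous_gradx (hψ : ContDiff ℝ 2 fun p : ℝ × (Fin n → ℝ) => ψ p.1 p.2) (k : Fin n) :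
    Continuous fun p : ℝ × (Fin n → ℝ) => gradx ψ p.1 p.2 k :=
  continuous_pd_slice (hψ.of_le one_le_two) k

lemma continuous_hessx (hψ : ContDiff ℝ 2 fun p : ℝ × (Fin n → ℝ) => ψ p.1 p.2) (k l : Fin n) :
    Continuous fun p : ℝ × (Fin n → ℝ) => hessx ψ p.1 p.2 k l := by
  have hgrad : ContDiff ℝ 1 fun p : ℝ × (Fin n → ℝ) =>
      fderiv ℝ (fun p : ℝ × (Fin n → ℝ) => ψ p.1 p.2) p (0, Pi.single k 1) :=
    (hψ.fderiv_right (m := 1) le_rfl).clm_apply contDiff_const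
  convert continuous_pd_slice hgrad l using 3 with p
  simp only [hessx, ← pd_slice_eq_fderiv ((hψ.differentiable two_ne_zero) _)]

end Derivatives

section Symbols

variable {n : ℕ} (a : Fin n → Fin n → ℝ → (Fin n → ℝ) → ℝ) (ψ : ℝ → (Fin n → ℝ) → ℝ)
  (t : ℝ) (x : Fin n → ℝ)

noncomputable def charForm (ξ : Fin n → ℝ) (σ : ℝ) : ℝ :=
  aF a t x ξ (gradx ψ t x) ^ 2 + σ ^ 2 * aF a t x (gradx ψ t x) (gradx ψ t x) ^ 2

lemma aF_comm (ha_symm : ∀ k j, a k j = a j k) (u v : Fin n → ℝ) :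
    aF a t x u v = aF a t x v u := by
  rw [aF, aF, sum_comm]
  exact sum_congr rfl fun j _ => sum_congr rfl fun k _ => by rw [ha_symm k j]; ring

lemma aF_sq (u v : Fin n → ℝ) :
    aF a t x u v ^ 2 =
      ∑ m, ∑ m', ∑ k, ∑ l, a m k t x * a m' l t x * u m * u m' * v k * v l := by
  simp only [aF, sq, sum_mul_sum]
  exact sum_congr rfl fun _ _ => sum_congr rfl fun _ _ => sum_congr rfl fun _ _ =>
    sum_congr rfl fun _ _ => by ring

lemma aF_smul_left (r : ℝ) (u v : Fin n → ℝ) : aF a t x (r • u) v = r * aF a t x u v := by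
  simp only [aF, Pi.smul_apply, smul_eq_mul, mul_sum]
  exact sum_congr rfl fun _ _ => sum_congr rfl fun _ _ => by ring

lemma qSym_zero_right (ξ : Fin n → ℝ) :
    qSym a ψ t x ξ 0 =
      4 * ∑ m, ∑ m', ∑ k, ∑ l, a m k t x * a m' l t x * ξ m * ξ m' * hessx ψ t x k l
        - 2 * ∑ m, ∑ k, a m k t x * gradx ψ t x m * aD a k t x ξ ξ
        + 4 * ∑ m, ∑ k, a m k t x * ξ m * aD a k t x ξ (gradx ψ t x) := by
  simp [qSym, mul_assoc]

lemma qSym_smul (r : ℝ) (ξ : Fin n → ℝ) (σ : ℝ) :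
    qSym a ψ t x (r • ξ) (r * σ) = r ^ 2 * qSym a ψ t x ξ σ := by
  simp only [qSym, aD, Pi.smul_apply, smul_eq_mul, sq, mul_sum, mul_sub, mul_add,
    sum_add_distrib, sum_sub_distrib, mul_comm, mul_assoc, mul_left_comm]

lemma charForm_smul (r : ℝ) (ξ : Fin n → ℝ) (σ : ℝ) :
    charForm a ψ t x (r • ξ) (r * σ) = r ^ 2 * charForm a ψ t x ξ σ := by
  rw [charForm, charForm, aF_smul_left]
  ring

lemma charForm_nonneg (ξ : Fin n → ℝ) (σ : ℝ) : 0 ≤ charForm a ψ t x ξ σ := by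
  unfold charForm
  positivity

lemma charForm_eq_zero_iff {ξ : Fin n → ℝ} {σ : ℝ}
    (hg : aF a t x (gradx ψ t x) (gradx ψ t x) ≠ 0) :
    charForm a ψ t x ξ σ = 0 ↔ aF a t x ξ (gradx ψ t x) = 0 ∧ σ = 0 := by
  rw [charForm, add_eq_zero_iff_of_nonneg (by positivity) (by positivity)]
  simp [hg]

lemma qAlpha_eq (lam τ : ℝ) (ξ : Fin n → ℝ) :
    qAlpha a ψ lam t x ξ τ =
      lam * (Real.exp (lam * ψ t x) / t) *
        (qSym a ψ t x ξ (τ * lam * (Real.exp (lam * ψ t x) / t))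
          + 4 * lam * charForm a ψ t x ξ (τ * lam * (Real.exp (lam * ψ t x) / t))) := by
  simp only [qAlpha, qSym, charForm, aF_sq]
  generalize Real.exp (lam * ψ t x) / t = φ
  generalize gradx ψ t x = g
  simp only [mul_sum, mul_sub, mul_add, add_mul, sum_add_distrib, sum_sub_distrib]
  simp only [sq, mul_comm, mul_assoc, mul_left_comm]
  ring

end Symbols

section Continuity

variable {n : ℕ} {a : Fin n → Fin n → ℝ → (Fin n → ℝ) → ℝ} {ψ : ℝ → (Fin n → ℝ) → ℝ}

lemma continuous_qSym (ha_reg : ∀ k j, ContDiff ℝ 1 fun p : ℝ × (Fin n → ℝ) => a k j p.1 p.2)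
    (hψ : ContDiff ℝ 2 fun p : ℝ × (Fin n → ℝ) => ψ p.1 p.2) :
    Continuous fun q : (ℝ × (Fin n → ℝ)) × ((Fin n → ℝ) × ℝ) =>
      qSym a ψ q.1.1 q.1.2 q.2.1 q.2.2 := by
  have ha : ∀ k j, Continuous fun q : (ℝ × (Fin n → ℝ)) × ((Fin n → ℝ) × ℝ) =>
      a k j q.1.1 q.1.2 := fun k j => (ha_reg k j).continuous.comp continuous_fst
  have hDa : ∀ p k j, Continuous fun q : (ℝ × (Fin n → ℝ)) × ((Fin n → ℝ) × ℝ) =>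
      pd p (fun y => a k j q.1.1 y) q.1.2 :=
    fun p k j => (continuous_pd_slice (ha_reg k j) p).comp continuous_fst
  have hg : ∀ k, Continuous fun q : (ℝ × (Fin n → ℝ)) × ((Fin n → ℝ) × ℝ) =>
      gradx ψ q.1.1 q.1.2 k := fun k => (continuous_gradx hψ k).comp continuous_fst
  have hH : ∀ k l, Continuous fun q : (ℝ × (Fin n → ℝ)) × ((Fin n → ℝ) × ℝ) =>
      hessx ψ q.1.1 q.1.2 k l := fun k l => (continuous_hessx hψ k l).comp continuous_fst
  unfold qSym aD
  fun_prop

lemma continuous_charForm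
    (ha_reg : ∀ k j, ContDiff ℝ 1 fun p : ℝ × (Fin n → ℝ) => a k j p.1 p.2)
    (hψ : ContDiff ℝ 2 fun p : ℝ × (Fin n → ℝ) => ψ p.1 p.2) :
    Continuous fun q : (ℝ × (Fin n → ℝ)) × ((Fin n → ℝ) × ℝ) =>
      charForm a ψ q.1.1 q.1.2 q.2.1 q.2.2 := by
  have ha : ∀ k j, Continuous fun q : (ℝ × (Fin n → ℝ)) × ((Fin n → ℝ) × ℝ) =>
      a k j q.1.1 q.1.2 := fun k j => (ha_reg k j).continuous.comp continuous_fst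
  have hg : ∀ k, Continuous fun q : (ℝ × (Fin n → ℝ)) × ((Fin n → ℝ) × ℝ) =>
      gradx ψ q.1.1 q.1.2 k := fun k => (continuous_gradx hψ k).comp continuous_fst
  unfold charForm aF
  fun_prop

end Continuity

section Compactness

variable {ι : Type*} [Fintype ι]

lemma sum_sq_pos_of_ne_zero {v : ι → ℝ} (hv : v ≠ 0) :
    0 < ∑ i, v i ^ 2 := by
  obtain ⟨i, hi⟩ := Function.ne_iff.1 hv
  have hi : v i ≠ 0 := hi
  exact sum_pos' (fun j _ => sq_nonneg (v j)) ⟨i, mem_univ i, by positivity⟩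

lemma isCompact_sumSq_eq_one :
    IsCompact {v : (ι → ℝ) × ℝ | ∑ i, v.1 i ^ 2 + v.2 ^ 2 = 1} := by
  have hbox : IsCompact ((Set.univ.pi fun _ : ι => Set.Icc (-1 : ℝ) 1) ×ˢ Set.Icc (-1 : ℝ) 1) :=
    (isCompact_univ_pi fun _ => isCompact_Icc).prod isCompact_Icc
  refine hbox.of_isClosed_subset (isClosed_eq (by fun_prop) continuous_const) ?_
  rintro ⟨ξ, σ⟩ (hv : ∑ i, ξ i ^ 2 + σ ^ 2 = 1)
  have hξ : ∀ i, ξ i ^ 2 ≤ 1 := fun i => by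
    have := single_le_sum (fun j _ => sq_nonneg (ξ j)) (mem_univ i)
    nlinarith [sq_nonneg σ]
  have hσ : σ ^ 2 ≤ 1 := by nlinarith [sum_nonneg fun j (_ : j ∈ univ) => sq_nonneg (ξ j)]
  simp only [Set.mem_prod, Set.mem_pi, Set.mem_univ, Set.mem_Icc, true_implies, ← abs_le,
    ← sq_le_one_iff_abs_le_one]
  exact ⟨hξ, hσ⟩

lemma mul_sumSq_le_of_homogeneous {F : (ι → ℝ) × ℝ → ℝ}
    (hF : ∀ (r : ℝ) v, F (r • v) = r ^ 2 * F v) {c : ℝ}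
    (hc : ∀ v : (ι → ℝ) × ℝ, ∑ i, v.1 i ^ 2 + v.2 ^ 2 = 1 → c ≤ F v) (v : (ι → ℝ) × ℝ) :
    c * (∑ i, v.1 i ^ 2 + v.2 ^ 2) ≤ F v := by
  set N := ∑ i, v.1 i ^ 2 + v.2 ^ 2
  have hN : 0 ≤ N := by positivity
  rcases hN.eq_or_lt with hN0 | hNpos
  · have hv : v = (0 : ℝ) • v := by
      rw [eq_comm, add_eq_zero_iff_of_nonneg (by positivity) (by positivity),
        Fintype.sum_eq_zero_iff_of_nonneg (fun _ => sq_nonneg _)] at hN0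
      ext i <;> simp_all [funext_iff]
    rw [← hN0, mul_zero, hv, hF]
    simp
  · set s := Real.sqrt N
    have hs : 0 < s := Real.sqrt_pos.2 hNpos
    have hs2 : s ^ 2 = N := Real.sq_sqrt hN
    have hunit : ∑ i, (s⁻¹ • v).1 i ^ 2 + (s⁻¹ • v).2 ^ 2 = 1 := by
      simp only [Prod.smul_fst, Prod.smul_snd, Pi.smul_apply, smul_eq_mul, mul_pow, ← mul_sum,
        ← mul_add, inv_pow, hs2]
      exact inv_mul_cancel₀ hNpos.ne'
    calc c * N = s ^ 2 * c := by rw [hs2, mul_comm]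
      _ ≤ s ^ 2 * F (s⁻¹ • v) := by gcongr; exact hc _ hunit
      _ = F v := by rw [← hF, smul_smul, mul_inv_cancel₀ hs.ne', one_smul]

lemma IsCompact.exists_pos_le_add_mul {X : Type*} [TopologicalSpace X] {K : Set X}
    (hK : IsCompact K) {f g : X → ℝ} (hf : Continuous f) (hg : Continuous g)
    (hg0 : ∀ x, 0 ≤ g x) (hfg : ∀ x ∈ K, g x = 0 → 0 < f x) :
    ∃ m, ∃ c > 0, ∀ μ ≥ m, ∀ x ∈ K, c ≤ f x + μ * g x := by
  obtain ⟨m, hm⟩ : ∃ m : ℕ, K ⊆ {x | 0 < f x + m * g x} := by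
    refine hK.elim_directed_cover _ (fun m => isOpen_lt continuous_const (by fun_prop))
      (fun x hx => Set.mem_iUnion.2 ?_) (Monotone.directed_le fun i j hij x hx => ?_)
    · rcases (hg0 x).eq_or_lt with hgx | hgx
      · exact ⟨0, by simpa [← hgx] using hfg x hx hgx.symm⟩
      · obtain ⟨m, hm⟩ := exists_nat_gt (-f x / g x)
        have := (div_lt_iff₀ hgx).1 hm
        exact ⟨m, show 0 < f x + m * g x by linarith⟩
    · have : (i : ℝ) * g x ≤ j * g x :=
        mul_le_mul_of_nonneg_right (by exact_mod_cast hij) (hg0 x)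
      exact show 0 < f x + j * g x from lt_of_lt_of_le hx (by linarith)
  have hfg_m : Continuous fun x => f x + m * g x := by fun_prop
  obtain ⟨c, hc, hcK⟩ := hK.exists_forall_le' hfg_m.continuousOn fun x hx => hm hx
  exact ⟨m, c, hc, fun μ hμ x hx =>
    (hcK x hx).trans (add_le_add_right (mul_le_mul_of_nonneg_right hμ (hg0 x)) _)⟩

end Compactness

section Garding

variable {n : ℕ} {a : Fin n → Fin n → ℝ → (Fin n → ℝ) → ℝ} {ψ : ℝ → (Fin n → ℝ) → ℝ}

theorem exists_pos_le_qSym_add_mul_charForm {P : Set (ℝ × (Fin n → ℝ))} (hP : IsCompact P)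
    (ha_reg : ∀ k j, ContDiff ℝ 1 fun p : ℝ × (Fin n → ℝ) => a k j p.1 p.2)
    (hψ : ContDiff ℝ 2 fun p : ℝ × (Fin n → ℝ) => ψ p.1 p.2)
    (hgg : ∀ p ∈ P, aF a p.1 p.2 (gradx ψ p.1 p.2) (gradx ψ p.1 p.2) ≠ 0)
    (hchar : ∀ p ∈ P, ∀ ξ : Fin n → ℝ, ξ ≠ 0 → aF a p.1 p.2 ξ (gradx ψ p.1 p.2) = 0 →
      0 < qSym a ψ p.1 p.2 ξ 0) :
    ∃ m, ∃ c > 0, ∀ μ ≥ m, ∀ p ∈ P, ∀ (ξ : Fin n → ℝ) (σ : ℝ),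
      c * (∑ i, ξ i ^ 2 + σ ^ 2) ≤ qSym a ψ p.1 p.2 ξ σ + μ * charForm a ψ p.1 p.2 ξ σ := by
  have hcharK : ∀ q ∈ P ×ˢ {v : (Fin n → ℝ) × ℝ | ∑ i, v.1 i ^ 2 + v.2 ^ 2 = 1},
      charForm a ψ q.1.1 q.1.2 q.2.1 q.2.2 = 0 → 0 < qSym a ψ q.1.1 q.1.2 q.2.1 q.2.2 := by
    rintro ⟨p, ξ, σ⟩ ⟨hp, hv : ∑ i, ξ i ^ 2 + σ ^ 2 = 1⟩ h0
    obtain ⟨hξg, rfl⟩ := (charForm_eq_zero_iff a ψ p.1 p.2 (hgg p hp)).1 h0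
    refine hchar p hp ξ (fun hξ => ?_) hξg
    simp [hξ] at hv
  obtain ⟨m, c, hc, hK⟩ := (hP.prod isCompact_sumSq_eq_one).exists_pos_le_add_mul
    (continuous_qSym ha_reg hψ) (continuous_charForm ha_reg hψ)
    (fun _ => charForm_nonneg a ψ _ _ _ _) hcharK
  refine ⟨m, c, hc, fun μ hμ p hp ξ σ => ?_⟩
  refine mul_sumSq_le_of_homogeneous
    (F := fun v => qSym a ψ p.1 p.2 v.1 v.2 + μ * charForm a ψ p.1 p.2 v.1 v.2)
    (fun r v => ?_) (fun v hv => hK μ hμ (p, v) ⟨hp, hv⟩) (ξ, σ)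
  simp only [Prod.smul_fst, Prod.smul_snd, smul_eq_mul, qSym_smul, charForm_smul]
  ring

lemma le_aF_of_mem_closure {Ω : Set (Fin n → ℝ)} {T β : ℝ} (hT : 0 < T)
    (ha : ∀ k j, Continuous fun p : ℝ × (Fin n → ℝ) => a k j p.1 p.2)
    (ha_ell : ∀ t ∈ Set.Ioo (0:ℝ) T, ∀ x ∈ Ω, ∀ η : Fin n → ℝ,
      β * ∑ i, η i ^ 2 ≤ ∑ k, ∑ j, a k j t x * η k * η j)
    {p : ℝ × (Fin n → ℝ)} (hp : p ∈ Set.Icc 0 T ×ˢ closure Ω) (η : Fin n → ℝ) :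
    β * ∑ i, η i ^ 2 ≤ aF a p.1 p.2 η η := by
  have hclosed : IsClosed {p : ℝ × (Fin n → ℝ) | β * ∑ i, η i ^ 2 ≤ aF a p.1 p.2 η η} :=
    isClosed_le continuous_const (by unfold aF; fun_prop)
  rw [← closure_Ioo hT.ne, ← closure_prod_eq] at hp
  exact closure_minimal (fun q hq => ha_ell _ hq.1 _ hq.2 η) hclosed hp

end Garding

lemma mul_le_lam_mul_of_le {c lam κ φ S τ X : ℝ} (hc : 0 < c) (hlam : 1 ≤ lam) (hκ : 0 < κ)
    (hκφ : κ ≤ φ) (hS : 0 ≤ S) (hX : c * (S + (τ * lam * φ) ^ 2) ≤ X) :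
    c * lam * κ * (S + τ ^ 2 * φ ^ 2) ≤ lam * φ * X := by
  have hκlam : κ ≤ lam ^ 2 * φ := hκφ.trans (le_mul_of_one_le_left (hκ.le.trans hκφ)
    (one_le_pow₀ hlam))
  calc c * lam * κ * (S + τ ^ 2 * φ ^ 2) = c * lam * (κ * S + κ * (τ ^ 2 * φ ^ 2)) := by ring
    _ ≤ c * lam * (φ * S + lam ^ 2 * φ * (τ ^ 2 * φ ^ 2)) := by gcongr
    _ = lam * φ * (c * (S + (τ * lam * φ) ^ 2)) := by ring
    _ ≤ lam * φ * X := mul_le_mul_of_nonneg_left hX (by nlinarith)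

theorem statement6
    (n : ℕ) (Ω : Set (Fin n → ℝ)) (hΩ : Bornology.IsBounded Ω) (T : ℝ) (hT : 0 < T)
    (a : Fin n → Fin n → ℝ → (Fin n → ℝ) → ℝ)
    (ha_symm : ∀ k j, a k j = a j k)
    (ha_reg : ∀ k j, ContDiff ℝ 1 (fun p : ℝ × (Fin n → ℝ) => a k j p.1 p.2))
    (β : ℝ) (hβ : 0 < β)
    (ha_ell : ∀ t ∈ Set.Ioo (0:ℝ) T, ∀ x ∈ Ω, ∀ η : Fin n → ℝ,
      β * ∑ i, η i ^ 2 ≤ ∑ k, ∑ j, a k j t x * η k * η j)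
    (ψ : ℝ → (Fin n → ℝ) → ℝ)
    (hψ : ContDiff ℝ 2 (fun p : ℝ × (Fin n → ℝ) => ψ p.1 p.2))
    (hgrad : ∀ t ∈ Set.Icc (0:ℝ) T, ∀ x ∈ closure Ω, gradx ψ t x ≠ 0)
    -- the pseudo-convexity inequality (ramsai) on the characteristic set
    (hpos : ∀ t ∈ Set.Icc (0:ℝ) T, ∀ x ∈ closure Ω, ∀ ξ : Fin n → ℝ, ξ ≠ 0 →
      aF a t x (gradx ψ t x) ξ = 0 →
        0 < 4 * ∑ m, ∑ m', ∑ k, ∑ l, a m k t x * a m' l t x * ξ m * ξ m'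
              * hessx ψ t x k l
          - 2 * ∑ m, ∑ k, a m k t x * gradx ψ t x m * aD a k t x ξ ξ
          + 4 * ∑ m, ∑ k, a m k t x * ξ m * aD a k t x ξ (gradx ψ t x)) :
    ∃ lam₁ > (0:ℝ), ∀ lam ≥ lam₁, ∃ C > (0:ℝ), ∀ t ∈ Set.Ioo (0:ℝ) T, ∀ x ∈ Ω,
      ∀ (ξ : Fin n → ℝ), ∀ τ > (0:ℝ),
        C * (∑ i, ξ i ^ 2 + τ ^ 2 * (Real.exp (lam * ψ t x) / t) ^ 2) ≤
          qAlpha a ψ lam t x ξ τ := by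
  set P := Set.Icc 0 T ×ˢ closure Ω
  have hP : IsCompact P := isCompact_Icc.prod hΩ.isCompact_closure
  have hgg : ∀ p ∈ P, aF a p.1 p.2 (gradx ψ p.1 p.2) (gradx ψ p.1 p.2) ≠ 0 := fun p hp =>
    ((mul_pos hβ (sum_sq_pos_of_ne_zero (hgrad p.1 hp.1 p.2 hp.2))).trans_le
      (le_aF_of_mem_closure hT (fun k j => (ha_reg k j).continuous) ha_ell hp _)).ne'
  have hchar : ∀ p ∈ P, ∀ ξ : Fin n → ℝ, ξ ≠ 0 → aF a p.1 p.2 ξ (gradx ψ p.1 p.2) = 0 →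
      0 < qSym a ψ p.1 p.2 ξ 0 := fun p hp ξ hξ h0 => by
    rw [qSym_zero_right]
    exact hpos p.1 hp.1 p.2 hp.2 ξ hξ (by rwa [aF_comm a _ _ ha_symm])
  obtain ⟨m, c, hc, hgarding⟩ := exists_pos_le_qSym_add_mul_charForm hP ha_reg hψ hgg hchar
  obtain ⟨ψmin, hψmin⟩ := hP.bddBelow_image hψ.continuous.continuousOn
  refine ⟨max 1 (m / 4), lt_max_of_lt_left one_pos, fun lam hlam => ?_⟩
  have hlam1 : 1 ≤ lam := le_of_max_le_left hlam
  refine ⟨c * lam * (Real.exp (lam * ψmin) / T), by positivity, fun t ht x hx ξ τ _ => ?_⟩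
  have htx : (t, x) ∈ P := ⟨⟨ht.1.le, ht.2.le⟩, subset_closure hx⟩
  have hφ : Real.exp (lam * ψmin) / T ≤ Real.exp (lam * ψ t x) / t := by
    have hψtx : ψmin ≤ ψ t x := hψmin ⟨(t, x), htx, rfl⟩
    gcongr
    exacts [ht.1, ht.2.le]
  rw [qAlpha_eq]
  exact mul_le_lam_mul_of_le hc hlam1 (by positivity) hφ (by positivity)
    (hgarding (4 * lam) (by linarith [le_of_max_le_right hlam]) (t, x) htx ξ _)
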